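/- If Σ and Υ are positive definite and 0 ≤ ε₁ ≤ ε₂ ≤ 1, and Σ and Υ commute, then the MMSE error covariance is monotone in ε: Σ − (1−ε₁²)Σ((1−ε₁²)Σ + ε₁²Υ)⁻¹Σ ⪯ Σ − (1−ε₂²)Σ((1−ε₂²)Σ + ε₂²Υ)⁻¹Σ in the Loewner order. -/

import Mathlib

/-!
Write `A c = (1 - c) Σ + c Υ` with `c = ε²`. Since `(1 - c₁) A c₂ - (1 - c₂) A c₁ = (c₂ - c₁) Υ`,
the difference of the error covariances factors as
`Σ'(c₂) - Σ'(c₁) = (c₂ - c₁) Σ (A c₁)⁻¹ Υ (A c₂)⁻¹ Σ`.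
When `Σ` and `Υ` commute, `(A c₁)⁻¹`, `Υ` and `(A c₂)⁻¹` are pairwise commuting positive
semidefinite matrices, so their product is positive semidefinite, and so is its congruence by `Σ`.
-/

open scoped ComplexOrder MatrixOrder

namespace Matrix

theorem commute_inv_left {n α : Type*} [Fintype n] [DecidableEq n] [CommRing α]
    {A B : Matrix n n α} (h : Commute A B) : Commute A⁻¹ B := by
  simpa only [zpow_neg_one] using Matrix.Commute.zpow_left h (-1)

theorem smul_inv_sub_smul_inv {n α R : Type*} [Fintype n] [DecidableEq n] [CommRing α]
    [CommSemiring R] [Algebra R α] {A B : Matrix n n α} (hA : IsUnit A) (hB : IsUnit B) (a b : R) :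
    a • A⁻¹ - b • B⁻¹ = A⁻¹ * (a • B - b • A) * B⁻¹ := by
  rw [mul_sub, sub_mul, mul_smul_comm, smul_mul_assoc, mul_smul_comm, smul_mul_assoc, mul_assoc,
    mul_nonsing_inv _ ((isUnit_iff_isUnit_det B).mp hB), mul_one,
    nonsing_inv_mul _ ((isUnit_iff_isUnit_det A).mp hA), one_mul]

variable {n 𝕜 : Type*} [RCLike 𝕜]

theorem PosSemidef.mul_of_commute [Fintype n] [DecidableEq n] {A B : Matrix n n 𝕜}
    (hA : A.PosSemidef) (hB : B.PosSemidef) (h : Commute A B) : (A * B).PosSemidef :=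
  nonneg_iff_posSemidef.mp (h.mul_nonneg hA.nonneg hB.nonneg)

theorem PosDef.smul_add_smul {A B : Matrix n n 𝕜} (hA : A.PosDef) (hB : B.PosDef) {s t : ℝ}
    (hs : 0 ≤ s) (ht : 0 ≤ t) (hst : 0 < s + t) : (s • A + t • B).PosDef := by
  rcases hs.eq_or_lt with rfl | hs
  · simpa using hB.smul (by simpa using hst)
  · exact (hA.smul hs).add_posSemidef (hB.posSemidef.smul ht)

end Matrix

open Matrix

section MMSE

variable {n 𝕜 : Type*} [RCLike 𝕜] (S U : Matrix n n 𝕜)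

def obsCov (c : ℝ) : Matrix n n 𝕜 := (1 - c) • S + c • U

noncomputable def mmseCov [Fintype n] [DecidableEq n] (c : ℝ) : Matrix n n 𝕜 :=
  S - (1 - c) • (S * (obsCov S U c)⁻¹ * S)

variable {S U}

theorem obsCov_posDef (hS : S.PosDef) (hU : U.PosDef) {c : ℝ} (hc₀ : 0 ≤ c) (hc₁ : c ≤ 1) :
    (obsCov S U c).PosDef :=
  hS.smul_add_smul hU (by linarith) hc₀ (by linarith)

variable [Fintype n]

theorem Commute.obsCov_obsCov (h : Commute S U) (c d : ℝ) :
    Commute (obsCov S U c) (obsCov S U d) := by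
  unfold obsCov
  apply_rules [Commute.add_left, Commute.add_right, Commute.smul_left, Commute.smul_right,
    Commute.refl, h.symm]

theorem Commute.obsCov_right (h : Commute S U) (c : ℝ) : Commute (obsCov S U c) U := by
  unfold obsCov
  apply_rules [Commute.add_left, Commute.smul_left, Commute.refl]

variable [DecidableEq n]

theorem mmseCov_sub_mmseCov {c₁ c₂ : ℝ} (h₁ : IsUnit (obsCov S U c₁))
    (h₂ : IsUnit (obsCov S U c₂)) :
    mmseCov S U c₂ - mmseCov S U c₁ =
      (c₂ - c₁) • (S * ((obsCov S U c₁)⁻¹ * U * (obsCov S U c₂)⁻¹) * S) := by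
  have hcomb : (1 - c₁) • obsCov S U c₂ - (1 - c₂) • obsCov S U c₁ = (c₂ - c₁) • U := by
    unfold obsCov
    module
  calc mmseCov S U c₂ - mmseCov S U c₁
      = S * ((1 - c₁) • (obsCov S U c₁)⁻¹ - (1 - c₂) • (obsCov S U c₂)⁻¹) * S := by
        simp only [mmseCov, mul_sub, sub_mul, mul_smul_comm, smul_mul_assoc]
        abel
    _ = _ := by
        rw [smul_inv_sub_smul_inv h₁ h₂, hcomb, mul_smul_comm, smul_mul_assoc, mul_smul_comm,
          smul_mul_assoc]

theorem monotoneOn_mmseCov (hS : S.PosDef) (hU : U.PosDef) (hSU : Commute S U) :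
    MonotoneOn (mmseCov S U) (Set.Icc 0 1) := by
  rintro c₁ ⟨h₀, -⟩ c₂ ⟨-, h₂⟩ h₁₂
  have hA := obsCov_posDef hS hU h₀ (h₁₂.trans h₂)
  have hB := obsCov_posDef hS hU (h₀.trans h₁₂) h₂
  have hAU : ((obsCov S U c₁)⁻¹ * U).PosSemidef :=
    hA.inv.posSemidef.mul_of_commute hU.posSemidef (commute_inv_left (hSU.obsCov_right c₁))
  have hAUB : ((obsCov S U c₁)⁻¹ * U * (obsCov S U c₂)⁻¹).PosSemidef :=
    hAU.mul_of_commute hB.inv.posSemidef <| Commute.mul_left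
      (commute_inv_left (commute_inv_left (hSU.obsCov_obsCov c₂ c₁)).symm)
      (commute_inv_left (hSU.obsCov_right c₂)).symm
  rw [le_iff, mmseCov_sub_mmseCov hA.isUnit hB.isUnit]
  refine PosSemidef.smul ?_ (sub_nonneg.mpr h₁₂)
  simpa only [hS.isHermitian.eq] using hAUB.conjTranspose_mul_mul_same S

end MMSE

/-- Monotonicity of the MMSE error covariance in the estimation-noise level `ε`
(for commuting positive definite `Σ`, `Ups`): `SigP(ε₁) ⪯ SigP(ε₂)` in the Loewner order
whenever `0 ≤ ε₁ ≤ ε₂ ≤ 1`. -/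
theorem stmt_16 {M : ℕ} (Sig Ups : Matrix (Fin M) (Fin M) ℂ)
    (hSig : Sig.PosDef) (hUps : Ups.PosDef) (hcomm : Sig * Ups = Ups * Sig)
    (ε₁ ε₂ : ℝ) (h01 : 0 ≤ ε₁) (h12 : ε₁ ≤ ε₂) (h21 : ε₂ ≤ 1)
    (SigP : ℝ → Matrix (Fin M) (Fin M) ℂ)
    (hdef : ∀ ε : ℝ, SigP ε =
      Sig - ((1 - ε ^ 2 : ℝ) : ℂ) •
        (Sig * (((1 - ε ^ 2 : ℝ) : ℂ) • Sig + ((ε ^ 2 : ℝ) : ℂ) • Ups)⁻¹ * Sig)) :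
    (SigP ε₂ - SigP ε₁).PosSemidef := by
  have hSigP : ∀ ε, SigP ε = mmseCov Sig Ups (ε ^ 2) := fun ε => by
    simp only [hdef, mmseCov, obsCov, Complex.coe_smul]
  have hsq₁₂ : ε₁ ^ 2 ≤ ε₂ ^ 2 := pow_le_pow_left₀ h01 h12 2
  have hsq₂ : ε₂ ^ 2 ≤ 1 := pow_le_one₀ (h01.trans h12) h21
  rw [hSigP, hSigP]
  exact monotoneOn_mmseCov hSig hUps hcomm ⟨sq_nonneg ε₁, hsq₁₂.trans hsq₂⟩
    ⟨sq_nonneg ε₂, hsq₂⟩ hsq₁₂
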